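/- Let θ, α, η, γ be inner functions such that θ = ā₁⁻¹·η·a₁ and α = ā₂⁻¹·γ·a₂ for some a₁, a₂ ∈ 𝒢H∞. Then for every φ ∈ L∞, setting φ̃ = ā₂·φ·a₁, one has A_φ^{θ,α} = A_{ā₂⁻¹}^{γ,α} ∘ A_{φ̃}^{η,γ} ∘ A_{a₁⁻¹}^{θ,η}, where A_{a₁⁻¹}^{θ,η} = M_{a₁⁻¹}|_{K_θ}; in particular, A_φ^{θ,α} is equivalent to A_{φ̃}^{η,γ}. -/

import Mathlib

open MeasureTheory

noncomputable section

/-! ## Setup: the circle, L², L∞, multiplication operators, Hardy space,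
model spaces, and generalized Toeplitz operators -/

instance : Fact (0 < 2 * Real.pi) := ⟨by positivity⟩

/-- The normalized Lebesgue (Haar) measure `dθ/2π` on the circle. -/
abbrev μH : Measure (AddCircle (2 * Real.pi)) := AddCircle.haarAddCircle

/-- The Lebesgue space `L²` of the circle. -/
abbrev L2 : Type := Lp ℂ 2 μH

/-- The space `L∞` of essentially bounded functions on the circle. -/
abbrev Linf : Type := Lp ℂ ⊤ μH

/-- Pointwise (a.e.) multiplication on `L∞`. -/
instance : Mul Linf :=
  ⟨fun f g => ((Lp.memLp g).smul (p := ⊤) (r := ⊤) (Lp.memLp f)).toLp (⇑f • ⇑g)⟩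

/-- The constant function `1` as an element of `L∞`. -/
instance : One Linf := ⟨(memLp_const (1 : ℂ)).toLp (fun _ => (1 : ℂ))⟩

/-- Complex conjugation on `L∞`. -/
instance : Star Linf :=
  ⟨fun f => ((Complex.conjCLE.toContinuousLinearMap).comp_memLp' (Lp.memLp f)).toLp
    ((starRingEnd ℂ) ∘ ⇑f)⟩

/-- Multiplication of an `L²` function by an `L∞` function. -/
def mulFun (φ : Linf) (f : L2) : L2 :=
  ((Lp.memLp f).smul (p := ⊤) (r := 2) (Lp.memLp φ)).toLp (⇑φ • ⇑f)

lemma mulFun_coe (φ : Linf) (f : L2) : mulFun φ f =ᵐ[μH] ⇑φ • ⇑f :=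
  MemLp.coeFn_toLp _

lemma mulFun_norm_le (φ : Linf) (f : L2) : ‖mulFun φ f‖ ≤ ‖φ‖ * ‖f‖ := by
  rw [mulFun, Lp.norm_toLp, Lp.norm_def, Lp.norm_def, ← ENNReal.toReal_mul]
  refine ENNReal.toReal_mono ?_ ?_
  · exact ENNReal.mul_ne_top (Lp.eLpNorm_ne_top φ) (Lp.eLpNorm_ne_top f)
  · exact eLpNorm_smul_le_eLpNorm_top_mul_eLpNorm 2 (Lp.aestronglyMeasurable f) ⇑φ

/-- The bounded multiplication operator `M_φ : L² → L²` for `φ ∈ L∞`. -/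
def mulCLM (φ : Linf) : L2 →L[ℂ] L2 :=
  LinearMap.mkContinuous
    { toFun := mulFun φ
      map_add' := by
        intro f g
        apply Lp.ext
        filter_upwards [mulFun_coe φ (f + g), mulFun_coe φ f, mulFun_coe φ g,
          Lp.coeFn_add f g, Lp.coeFn_add (mulFun φ f) (mulFun φ g)] with x h1 h2 h3 h4 h5
        simp only [Pi.smul_apply', Pi.add_apply] at *
        rw [h1, h5, h2, h3, h4]
        exact smul_add _ _ _
      map_smul' := by
        intro c f
        apply Lp.ext
        filter_upwards [mulFun_coe φ (c • f), mulFun_coe φ f,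
          Lp.coeFn_smul c f, Lp.coeFn_smul c (mulFun φ f)] with x h1 h2 h3 h4
        simp only [Pi.smul_apply', Pi.smul_apply, RingHom.id_apply] at *
        rw [h1, h4, h2, h3]
        exact smul_comm _ _ _ }
    ‖φ‖ (mulFun_norm_le φ)

/-- The image `a·K = {a f : f ∈ K}` of a subspace `K ⊆ L²` under multiplication by `a ∈ L∞`. -/
def smulSub (a : Linf) (K : Submodule ℂ L2) : Submodule ℂ L2 :=
  K.map (mulCLM a : L2 →ₗ[ℂ] L2)

/-- The Hardy space `H² = {f ∈ L² : f̂(n) = 0 for n < 0}`. -/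
def Hardy : Submodule ℂ L2 where
  carrier := {f | ∀ n : ℤ, n < 0 → fourierBasis.repr f n = 0}
  add_mem' := by
    intro f g hf hg n hn
    rw [map_add, lp.coeFn_add, Pi.add_apply, hf n hn, hg n hn, add_zero]
  zero_mem' := by
    intro n hn
    rw [map_zero, lp.coeFn_zero]
    rfl
  smul_mem' := by
    intro c f hf n hn
    rw [_root_.map_smul, lp.coeFn_smul, Pi.smul_apply, hf n hn, smul_zero]

lemma hardy_isClosed : IsClosed (Hardy : Set L2) := by
  have h : (Hardy : Set L2) =
      ⋂ n : {m : ℤ // m < 0}, {f : L2 | fourierBasis.repr f n.1 = 0} := by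
    ext f
    constructor
    · intro hf
      exact Set.mem_iInter.2 fun n => hf n.1 n.2
    · intro hf n hn
      exact Set.mem_iInter.1 hf ⟨n, hn⟩
  rw [h]
  refine isClosed_iInter fun n => isClosed_eq ?_ continuous_const
  have : (fun f : L2 => fourierBasis.repr f n.1) =
      fun f : L2 => (innerSL ℂ (fourierBasis n.1)) f := by
    funext f
    exact fourierBasis.repr_apply_apply f n.1
  rw [this]
  exact (innerSL ℂ (fourierBasis n.1)).continuous

instance : CompleteSpace Hardy := hardy_isClosed.completeSpace_coe

/-- The model space `K_θ = H² ⊖ θH² = H² ∩ (θH²)^⊥`. -/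
def modelSpace (θ : Linf) : Submodule ℂ L2 :=
  Hardy ⊓ (smulSub θ Hardy)ᗮ

instance (θ : Linf) : CompleteSpace (modelSpace θ) := by
  refine @IsClosed.completeSpace_coe _ _ _ (modelSpace θ : Set L2) ?_
  have h : (modelSpace θ : Set L2) = (Hardy : Set L2) ∩ ((smulSub θ Hardy)ᗮ : Set L2) := rfl
  rw [h]
  exact hardy_isClosed.inter (smulSub θ Hardy).isClosed_orthogonal

/-- The generalized Toeplitz operator `T_φ^{H₁,H₂} = P_{H₂} M_φ |_{H₁}`. -/
def genToeplitz (φ : Linf) (H₁ H₂ : Submodule ℂ L2) [CompleteSpace H₂] : H₁ →L[ℂ] H₂ :=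
  (Submodule.orthogonalProjectionOnto H₂).comp ((mulCLM φ).comp H₁.subtypeL)

/-- The orthogonal projection of `L²` onto `H`, viewed as an operator `L² → L²`. -/
def projL (H : Submodule ℂ L2) [CompleteSpace H] : L2 →L[ℂ] L2 :=
  H.subtypeL.comp (Submodule.orthogonalProjectionOnto H)

/-- `φ ∈ H∞`: all negative Fourier coefficients of `φ` vanish. -/
def IsHardyInf (φ : Linf) : Prop := ∀ n : ℤ, n < 0 → fourierCoeff (⇑φ) n = 0

/-- `θ` is an inner function: `θ ∈ H∞` and `|θ| = 1` a.e. on the circle. -/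
def IsInner (θ : Linf) : Prop :=
  IsHardyInf θ ∧ ∀ᵐ x ∂μH, ‖(θ : AddCircle (2 * Real.pi) → ℂ) x‖ = 1

/-- `a ∈ 𝒢H∞` with explicit inverse `b ∈ H∞`. -/
def GHinfPair (a b : Linf) : Prop := IsHardyInf a ∧ IsHardyInf b ∧ a * b = 1

/-- `a ∈ 𝒢H∞`: `a` is invertible in the algebra `H∞`. -/
def IsGHinf (a : Linf) : Prop := ∃ b, GHinfPair a b

/-- `b ∈ 𝒢H̄∞`: `b` is the conjugate of an element of `𝒢H∞`. -/
def IsGHinfBar (b : Linf) : Prop := ∃ c, IsGHinf c ∧ b = star c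

/-- `a ∈ 𝒢L∞` with explicit inverse `b`. -/
def GLinfPair (a b : Linf) : Prop := a * b = 1 ∧ b * a = 1

/-- `a ∈ 𝒢L∞`: `a` is invertible in the algebra `L∞`. -/
def IsGLinf (a : Linf) : Prop := ∃ b, GLinfPair a b

/-- The kernel of an operator between subspaces of `L²`, viewed as a subspace of `L²`. -/
def subKer {K₁ K₂ : Submodule ℂ L2} (T : K₁ →L[ℂ] K₂) : Submodule ℂ L2 :=
  (LinearMap.ker (T : K₁ →ₗ[ℂ] K₂)).map K₁.subtype

/-- The range of an operator between subspaces of `L²`, viewed as a subspace of `L²`. -/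
def subRan {K₁ K₂ : Submodule ℂ L2} (T : K₁ →L[ℂ] K₂) : Submodule ℂ L2 :=
  (LinearMap.range (T : K₁ →ₗ[ℂ] K₂)).map K₂.subtype

/-- The image of a subspace `S ⊆ K₁` under `T : K₁ → K₂`, viewed as a subspace of `L²`. -/
def opImage {K₁ K₂ : Submodule ℂ L2} (T : K₁ →L[ℂ] K₂) (S : Submodule ℂ K₁) :
    Submodule ℂ L2 :=
  (S.map (T : K₁ →ₗ[ℂ] K₂)).map K₂.subtype

section Antilinear

variable {E : Type*} [NormedAddCommGroup E] [InnerProductSpace ℂ E]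

/-- `C` is antilinear: `C(f + a g) = C f + ā C g`. -/
def IsAntilinearMap (C : E → E) : Prop :=
  ∀ (f g : E) (a : ℂ), C (f + a • g) = C f + (starRingEnd ℂ a) • C g

/-- `Cs` is the antilinear adjoint of `C`: `⟨C f, g⟩ = conj ⟨f, Cs g⟩`. -/
def IsAntilinearAdjointOf (C Cs : E → E) : Prop :=
  ∀ f g : E, (inner ℂ (C f) g : ℂ) = (starRingEnd ℂ) (inner ℂ f (Cs g) : ℂ)

/-- `C` is an antilinear unitary: it is antilinear and its antilinear adjoint is its inverse. -/
def IsAntilinearUnitary (C : E → E) : Prop :=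
  IsAntilinearMap C ∧ ∃ Cs : E → E, IsAntilinearAdjointOf C Cs ∧
    Function.LeftInverse Cs C ∧ Function.RightInverse Cs C

/-- `T` is complex selfadjoint with respect to `C` (with inverse `Cinv`): `C T C⁻¹ = T*`. -/
def IsComplexSelfadjointWith [CompleteSpace E] (T : E →L[ℂ] E) (C Cinv : E → E) : Prop :=
  ∀ f : E, C (T (Cinv f)) = ContinuousLinearMap.adjoint T f

end Antilinear

/-! Multiplication by `b₁ = a₁⁻¹` preserves `H²`, and the relation `θ = b̄₁ η a₁` gives
`b̄₁ η = θ b₁`, which turns orthogonality to `θH²` into orthogonality to `ηH²`; so `M_{b₁}` maps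
`K_θ` into `K_η`, and symmetrically `M_{a₁}` maps `K_η` into `K_θ`. Compressions of
multiplication operators compose like the multiplications themselves as soon as the inner
factor maps into the intermediate model space, or the adjoint of the outer one maps back into
it. Hence the factorization reduces to the identity `b̄₂ (ā₂ φ a₁) b₁ = φ`, and the outer
factors have the compressions of `ā₂` and `a₁` as inverses. -/

open scoped ComplexConjugate InnerProduct InnerProductSpace

namespace Linf

lemma coeFn_mul (f g : Linf) : ⇑(f * g) =ᵐ[μH] fun x => f x * g x :=
  MemLp.coeFn_toLp _

lemma coeFn_one : ⇑(1 : Linf) =ᵐ[μH] fun _ => (1 : ℂ) :=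
  MemLp.coeFn_toLp _

lemma coeFn_star (f : Linf) : ⇑(star f) =ᵐ[μH] fun x => conj (f x) :=
  MemLp.coeFn_toLp _

instance : CommMonoid Linf where
  mul_assoc f g h := Lp.ext <| by
    filter_upwards [coeFn_mul (f * g) h, coeFn_mul f g, coeFn_mul f (g * h), coeFn_mul g h]
      with x h₁ h₂ h₃ h₄
    rw [h₁, h₂, h₃, h₄, mul_assoc]
  one_mul f := Lp.ext <| by
    filter_upwards [coeFn_mul 1 f, coeFn_one] with x h₁ h₂
    rw [h₁, h₂, one_mul]
  mul_one f := Lp.ext <| by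
    filter_upwards [coeFn_mul f 1, coeFn_one] with x h₁ h₂
    rw [h₁, h₂, mul_one]
  mul_comm f g := Lp.ext <| by
    filter_upwards [coeFn_mul f g, coeFn_mul g f] with x h₁ h₂
    rw [h₁, h₂, mul_comm]

/- Mathlib's `Star` instance on `Lp` is not definitionally the one fixed on `Linf`, so the
`star` identities are proved directly instead of through a `StarMul` instance. -/
protected lemma star_star (f : Linf) : star (star f) = f := Lp.ext <| by
  filter_upwards [coeFn_star (star f), coeFn_star f] with x h₁ h₂
  rw [h₁, h₂, Complex.conj_conj]

protected lemma star_mul (f g : Linf) : star (f * g) = star f * star g := Lp.ext <| by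
  filter_upwards [coeFn_star (f * g), coeFn_mul (star f) (star g), coeFn_mul f g,
    coeFn_star f, coeFn_star g] with x h₁ h₂ h₃ h₄ h₅
  rw [h₁, h₂, h₃, h₄, h₅, map_mul]

protected lemma star_one : star (1 : Linf) = 1 := Lp.ext <| by
  filter_upwards [coeFn_star 1, coeFn_one] with x h₁ h₂
  rw [h₁, h₂, map_one]

end Linf

lemma coeFn_mulCLM (φ : Linf) (f : L2) : ⇑(mulCLM φ f) =ᵐ[μH] fun x => φ x * f x :=
  mulFun_coe φ f

lemma mulCLM_mul (a b : Linf) : mulCLM (a * b) = mulCLM a ∘L mulCLM b :=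
  ContinuousLinearMap.ext fun f => Lp.ext <| by
    filter_upwards [coeFn_mulCLM (a * b) f, coeFn_mulCLM a (mulCLM b f), coeFn_mulCLM b f,
      Linf.coeFn_mul a b] with x h₁ h₂ h₃ h₄
    rw [ContinuousLinearMap.comp_apply, h₁, h₂, h₃, h₄, mul_assoc]

lemma mulCLM_one : mulCLM 1 = ContinuousLinearMap.id ℂ L2 :=
  ContinuousLinearMap.ext fun f => Lp.ext <| by
    filter_upwards [coeFn_mulCLM 1 f, Linf.coeFn_one] with x h₁ h₂
    rw [ContinuousLinearMap.id_apply, h₁, h₂, one_mul]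

lemma adjoint_mulCLM (φ : Linf) : (mulCLM φ)† = mulCLM (star φ) := by
  refine ((ContinuousLinearMap.eq_adjoint_iff _ _).2 fun f g => ?_).symm
  rw [L2.inner_def, L2.inner_def]
  refine integral_congr_ae ?_
  filter_upwards [coeFn_mulCLM (star φ) f, coeFn_mulCLM φ g, Linf.coeFn_star φ] with x h₁ h₂ h₃
  rw [RCLike.inner_apply, RCLike.inner_apply, h₁, h₂, h₃, map_mul, Complex.conj_conj]
  ring

lemma inner_fourierBasis_mulCLM (h : Linf) (n k : ℤ) :
    ⟪(fourierBasis n : L2), mulCLM h (fourierBasis k)⟫_ℂ = fourierCoeff (⇑h) (n - k) := by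
  have coeFn_basis (m : ℤ) : ⇑(fourierBasis (T := 2 * Real.pi) m) =ᵐ[μH] fourier m := by
    rw [coe_fourierBasis]
    exact coeFn_fourierLp 2 m
  rw [L2.inner_def, fourierCoeff]
  refine integral_congr_ae ?_
  filter_upwards [coeFn_basis n, coeFn_mulCLM h (fourierBasis k), coeFn_basis k]
    with x h₁ h₂ h₃
  rw [RCLike.inner_apply, h₁, h₂, h₃, smul_eq_mul, ← fourier_neg, neg_sub, sub_eq_add_neg,
    fourier_add]
  ring

lemma mulCLM_mem_hardy {h : Linf} (hh : IsHardyInf h) {f : L2} (hf : f ∈ Hardy) :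
    mulCLM h f ∈ Hardy := by
  intro n hn
  let T : L2 →L[ℂ] ℂ := innerSL ℂ (fourierBasis n : L2) ∘L mulCLM h
  have hterm (k : ℤ) : T (fourierBasis.repr f k • (fourierBasis k : L2)) = 0 := by
    rcases lt_or_ge k 0 with hk | hk
    · rw [hf k hk, zero_smul, map_zero]
    · rw [map_smul, ContinuousLinearMap.comp_apply, innerSL_apply_apply,
        inner_fourierBasis_mulCLM, hh (n - k) (by omega), smul_zero]
  have hsum := T.hasSum (fourierBasis.hasSum_repr f)
  simp only [hterm] at hsum
  rw [fourierBasis.repr_apply_apply]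
  exact hsum.unique hasSum_zero

lemma mapsTo_mulCLM_modelSpace {c θ η : Linf} (hc : IsHardyInf c) (h : star c * η = θ * c) :
    Set.MapsTo (mulCLM c) (modelSpace θ) (modelSpace η) := by
  rintro f ⟨hf, hf_perp⟩
  refine ⟨mulCLM_mem_hardy hc hf, (Submodule.mem_orthogonal _ _).2 ?_⟩
  rintro _ ⟨w, hw, rfl⟩
  have hθcw : mulCLM θ (mulCLM c w) ∈ smulSub θ Hardy := ⟨mulCLM c w, mulCLM_mem_hardy hc hw, rfl⟩
  rw [← ContinuousLinearMap.adjoint_inner_left, adjoint_mulCLM, ContinuousLinearMap.coe_coe,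
    ← ContinuousLinearMap.comp_apply, ← mulCLM_mul, h, mulCLM_mul]
  exact (Submodule.mem_orthogonal _ _).1 hf_perp _ hθcw

lemma mapsTo_modelSpace_of_eq {θ η a b : Linf} (hab : GHinfPair a b)
    (hθ : θ = star b * η * a) :
    Set.MapsTo (mulCLM b) (modelSpace θ) (modelSpace η) ∧
      Set.MapsTo (mulCLM a) (modelSpace η) (modelSpace θ) := by
  obtain ⟨ha, hb, hab⟩ := hab
  have hstar : star a * star b = 1 := by rw [← Linf.star_mul, hab, Linf.star_one]
  refine ⟨mapsTo_mulCLM_modelSpace hb ?_, mapsTo_mulCLM_modelSpace ha ?_⟩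
  · rw [hθ, mul_assoc _ a, hab, mul_one]
  · rw [hθ, ← mul_assoc, ← mul_assoc, hstar, one_mul]

section genToeplitz

variable {K₁ K₂ K₃ : Submodule ℂ L2}

lemma genToeplitz_apply_of_mapsTo [CompleteSpace K₂] {φ : Linf} (hφ : Set.MapsTo (mulCLM φ) K₁ K₂) (f : K₁) :
    (genToeplitz φ K₁ K₂ f : L2) = mulCLM φ f :=
  congrArg Subtype.val (Submodule.orthogonalProjectionOnto_mem_subspace_eq_self ⟨_, hφ f.2⟩)

lemma genToeplitz_one [CompleteSpace K₁] : genToeplitz 1 K₁ K₁ = ContinuousLinearMap.id ℂ K₁ :=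
  ContinuousLinearMap.ext fun f => Subtype.ext <| by
    rw [genToeplitz_apply_of_mapsTo (by rw [mulCLM_one]; exact Set.mapsTo_id _),
      mulCLM_one, ContinuousLinearMap.id_apply, ContinuousLinearMap.id_apply]

lemma genToeplitz_comp_of_mapsTo [CompleteSpace K₂] [CompleteSpace K₃] {a b : Linf} (hb : Set.MapsTo (mulCLM b) K₁ K₂) :
    genToeplitz a K₂ K₃ ∘L genToeplitz b K₁ K₂ = genToeplitz (a * b) K₁ K₃ :=
  ContinuousLinearMap.ext fun f => by
    change K₃.orthogonalProjectionOnto (mulCLM a (genToeplitz b K₁ K₂ f : L2)) =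
      K₃.orthogonalProjectionOnto (mulCLM (a * b) f)
    rw [genToeplitz_apply_of_mapsTo hb, mulCLM_mul, ContinuousLinearMap.comp_apply]

lemma adjoint_genToeplitz [CompleteSpace K₁] [CompleteSpace K₂] (φ : Linf) :
    (genToeplitz φ K₁ K₂)† = genToeplitz (star φ) K₂ K₁ := by
  simp only [genToeplitz, ContinuousLinearMap.adjoint_comp, Submodule.adjoint_subtypeL,
    Submodule.adjoint_orthogonalProjectionOnto, adjoint_mulCLM, ContinuousLinearMap.comp_assoc]

lemma genToeplitz_comp_of_mapsTo_star [CompleteSpace K₁] [CompleteSpace K₂] [CompleteSpace K₃]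
    {a b : Linf} (ha : Set.MapsTo (mulCLM (star a)) K₃ K₂) :
    genToeplitz a K₂ K₃ ∘L genToeplitz b K₁ K₂ = genToeplitz (a * b) K₁ K₃ := by
  apply ContinuousLinearMap.adjoint.injective
  rw [ContinuousLinearMap.adjoint_comp, adjoint_genToeplitz, adjoint_genToeplitz,
    adjoint_genToeplitz, genToeplitz_comp_of_mapsTo ha, Linf.star_mul, mul_comm (star b)]

end genToeplitz

theorem statement18_general (θ α η γ : Linf)
    (a₁ b₁ a₂ b₂ : Linf) (h₁ : GHinfPair a₁ b₁) (h₂ : GHinfPair a₂ b₂)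
    (hθη : θ = star b₁ * η * a₁) (hαγ : α = star b₂ * γ * a₂) (φ : Linf) :
    genToeplitz φ (modelSpace θ) (modelSpace α) =
      (genToeplitz (star b₂) (modelSpace γ) (modelSpace α)).comp
        ((genToeplitz (star a₂ * φ * a₁) (modelSpace η) (modelSpace γ)).comp
          (genToeplitz b₁ (modelSpace θ) (modelSpace η))) ∧
    (∀ f : modelSpace θ,
      (genToeplitz b₁ (modelSpace θ) (modelSpace η) f : L2) = mulCLM b₁ (f : L2)) ∧
    (∃ E' : modelSpace α →L[ℂ] modelSpace γ,
      (genToeplitz (star b₂) (modelSpace γ) (modelSpace α)).comp E' =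
        ContinuousLinearMap.id ℂ (modelSpace α) ∧
      E'.comp (genToeplitz (star b₂) (modelSpace γ) (modelSpace α)) =
        ContinuousLinearMap.id ℂ (modelSpace γ)) ∧
    (∃ F' : modelSpace η →L[ℂ] modelSpace θ,
      (genToeplitz b₁ (modelSpace θ) (modelSpace η)).comp F' =
        ContinuousLinearMap.id ℂ (modelSpace η) ∧
      F'.comp (genToeplitz b₁ (modelSpace θ) (modelSpace η)) =
        ContinuousLinearMap.id ℂ (modelSpace θ)) := by
  obtain ⟨hb₁, ha₁⟩ := mapsTo_modelSpace_of_eq h₁ hθη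
  obtain ⟨hb₂, ha₂⟩ := mapsTo_modelSpace_of_eq h₂ hαγ
  rw [← Linf.star_star b₂] at hb₂
  rw [← Linf.star_star a₂] at ha₂
  have hab₁ : a₁ * b₁ = 1 := h₁.2.2
  have hab₂ : star a₂ * star b₂ = 1 := by rw [← Linf.star_mul, h₂.2.2, Linf.star_one]
  refine ⟨?_, genToeplitz_apply_of_mapsTo hb₁,
    ⟨genToeplitz (star a₂) (modelSpace α) (modelSpace γ), ?_, ?_⟩,
    ⟨genToeplitz a₁ (modelSpace η) (modelSpace θ), ?_, ?_⟩⟩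
  · rw [genToeplitz_comp_of_mapsTo hb₁, genToeplitz_comp_of_mapsTo_star hb₂, mul_assoc _ a₁,
      hab₁, mul_one, ← mul_assoc, mul_comm (star b₂), hab₂, one_mul]
  · rw [genToeplitz_comp_of_mapsTo_star hb₂, mul_comm (star b₂), hab₂, genToeplitz_one]
  · rw [genToeplitz_comp_of_mapsTo_star ha₂, hab₂, genToeplitz_one]
  · rw [genToeplitz_comp_of_mapsTo ha₁, mul_comm b₁, hab₁, genToeplitz_one]
  · rw [genToeplitz_comp_of_mapsTo hb₁, hab₁, genToeplitz_one]

/-- Theorem 6.1: if `θ = ā₁⁻¹ η a₁` and `α = ā₂⁻¹ γ a₂` with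
`a₁, a₂ ∈ 𝒢H∞` (inverses `b₁, b₂`), then for any `φ ∈ L∞`, with `φ̃ = ā₂ φ a₁`,
`A_φ^{θ,α} = A_{ā₂⁻¹}^{γ,α} A_{φ̃}^{η,γ} A_{a₁⁻¹}^{θ,η}` where
`A_{a₁⁻¹}^{θ,η} = M_{a₁⁻¹}|_{K_θ}`; in particular `A_φ^{θ,α}` is equivalent to
`A_{φ̃}^{η,γ}`. -/
theorem statement18 (θ α η γ : Linf)
    (hθ : IsInner θ) (hα : IsInner α) (hη : IsInner η) (hγ : IsInner γ)
    (a₁ b₁ a₂ b₂ : Linf) (h₁ : GHinfPair a₁ b₁) (h₂ : GHinfPair a₂ b₂)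
    (hθη : θ = star b₁ * η * a₁) (hαγ : α = star b₂ * γ * a₂) (φ : Linf) :
    genToeplitz φ (modelSpace θ) (modelSpace α) =
      (genToeplitz (star b₂) (modelSpace γ) (modelSpace α)).comp
        ((genToeplitz (star a₂ * φ * a₁) (modelSpace η) (modelSpace γ)).comp
          (genToeplitz b₁ (modelSpace θ) (modelSpace η))) ∧
    (∀ f : modelSpace θ,
      (genToeplitz b₁ (modelSpace θ) (modelSpace η) f : L2) = mulCLM b₁ (f : L2)) ∧
    (∃ E' : modelSpace α →L[ℂ] modelSpace γ,
      (genToeplitz (star b₂) (modelSpace γ) (modelSpace α)).comp E' =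
        ContinuousLinearMap.id ℂ (modelSpace α) ∧
      E'.comp (genToeplitz (star b₂) (modelSpace γ) (modelSpace α)) =
        ContinuousLinearMap.id ℂ (modelSpace γ)) ∧
    (∃ F' : modelSpace η →L[ℂ] modelSpace θ,
      (genToeplitz b₁ (modelSpace θ) (modelSpace η)).comp F' =
        ContinuousLinearMap.id ℂ (modelSpace η) ∧
      F'.comp (genToeplitz b₁ (modelSpace θ) (modelSpace η)) =
        ContinuousLinearMap.id ℂ (modelSpace θ)) :=
  statement18_general θ α η γ a₁ b₁ a₂ b₂ h₁ h₂ hθη hαγ φ
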